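/- arXiv:2406.08109 — 5 statements merged into one kernel-verified Lean document; each statement's English description precedes it below -/
import Mathlib

section
/- There exists a strictly increasing continuous function q : [0,1] → [0,1] that is continuously differentiable on the open interval (0,1), whose derivative on (0,1) extends to a Lipschitz continuous function on [0,1], and such that the set {z ∈ (0,1) : q'(z) = 0} has strictly positive Lebesgue measure. -/
open MeasureTheory Set Filter Topology Metric
open scoped ENNReal NNReal

noncomputable section
namespace Stmt0Aux

def e : ℕ → ℚ := (exists_surjective_nat ℚ).choose

lemma e_surj : Function.Surjective e := (exists_surjective_nat ℚ).choose_spec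

def U : Set ℝ := ⋃ n : ℕ, Metric.ball ((e n : ℚ) : ℝ) ((1/8) * (1/2)^n)

def C : Set ℝ := Icc 0 1 \ U

lemma isOpen_U : IsOpen U := isOpen_iUnion fun _ => isOpen_ball

lemma isClosed_C : IsClosed C := isClosed_Icc.sdiff isOpen_U

lemma volume_U_le : volume U ≤ 1/2 := by
  refine (measure_iUnion_le _).trans ?_
  have h : ∀ n : ℕ, volume (Metric.ball ((e n : ℚ) : ℝ) ((1/8) * (1/2)^n))
      = (1/4) * (1/2)^n := by
    intro n
    rw [Real.volume_ball]
    rw [show (2 : ℝ) * ((1/8) * (1/2)^n) = (1/4) * (1/2)^n by ring]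
    rw [ENNReal.ofReal_mul (by norm_num), ENNReal.ofReal_pow (by norm_num)]
    have e4 : ENNReal.ofReal (1/4 : ℝ) = (1/4 : ℝ≥0∞) := by
      rw [one_div, one_div, ENNReal.ofReal_inv_of_pos (by norm_num)]
      norm_num
    have e2 : ENNReal.ofReal (1/2 : ℝ) = (1/2 : ℝ≥0∞) := by
      rw [one_div, one_div, ENNReal.ofReal_inv_of_pos (by norm_num)]
      norm_num
    rw [e4, e2]
  simp_rw [h]
  rw [ENNReal.tsum_mul_left, ENNReal.tsum_geometric, one_div, one_div,
    ENNReal.one_sub_inv_two, inv_inv]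
  rw [show (4 : ℝ≥0∞)⁻¹ = (2 * 2)⁻¹ by norm_num, ENNReal.mul_inv (by norm_num) (by norm_num)]
  rw [mul_assoc, ENNReal.inv_mul_cancel (by norm_num) (by norm_num), mul_one]

lemma half_le_volume_C : 1/2 ≤ volume C := by
  have h1 : volume (Icc (0:ℝ) 1) ≤ volume U + volume C := by
    have := measure_le_inter_add_diff volume (Icc (0:ℝ) 1) U
    refine this.trans ?_
    exact add_le_add (measure_mono inter_subset_right) le_rfl
  rw [Real.volume_Icc] at h1
  norm_num at h1
  have h2 : volume U + volume C ≤ 1/2 + volume C := add_le_add volume_U_le le_rfl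
  have h3 : (1/2 : ℝ≥0∞) + 1/2 ≤ 1/2 + volume C := by
    rw [ENNReal.add_halves]; exact h1.trans h2
  exact (ENNReal.add_le_add_iff_left (by norm_num)).1 h3

lemma C_nonempty : C.Nonempty := by
  apply nonempty_of_measure_ne_zero (μ := volume)
  intro h
  have h2 := half_le_volume_C
  rw [h] at h2
  norm_num at h2

lemma rat_mem_U (r : ℚ) : (r : ℝ) ∈ U := by
  obtain ⟨n, hn⟩ := e_surj r
  refine mem_iUnion.2 ⟨n, ?_⟩
  rw [hn]
  exact Metric.mem_ball_self (by positivity)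

def f : ℝ → ℝ := fun x => Metric.infDist x C

lemma f_nonneg (x : ℝ) : 0 ≤ f x := Metric.infDist_nonneg

lemma f_lipschitz : LipschitzWith 1 f := Metric.lipschitz_infDist_pt C

lemma f_cont : Continuous f := f_lipschitz.continuous

lemma f_zero_of_mem {x : ℝ} (hx : x ∈ C) : f x = 0 := Metric.infDist_zero_of_mem hx

lemma f_pos_of_notMem {x : ℝ} (hx : x ∉ C) : 0 < f x :=
  (isClosed_C.notMem_iff_infDist_pos C_nonempty).1 hx

lemma integral_f_pos {x y : ℝ} (hxy : x < y) : 0 < ∫ t in x..y, f t := by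
  rw [intervalIntegral.integral_pos_iff_support_of_nonneg_ae
    (Eventually.of_forall f_nonneg) (f_cont.intervalIntegrable x y)]
  refine ⟨hxy, ?_⟩
  obtain ⟨r, hr1, hr2⟩ := exists_rat_btwn hxy
  have hrU : (r : ℝ) ∉ C := fun h => h.2 (rat_mem_U r)
  have hfr : 0 < f r := f_pos_of_notMem hrU
  set V : Set ℝ := f ⁻¹' (Ioi 0) ∩ Ioo x y with hV
  have hVopen : IsOpen V := (isOpen_Ioi.preimage f_cont).inter isOpen_Ioo
  have hVne : V.Nonempty := ⟨r, hfr, hr1, hr2⟩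
  refine lt_of_lt_of_le (hVopen.measure_pos volume hVne) (measure_mono ?_)
  rintro z ⟨hz1, hz2⟩
  exact ⟨ne_of_gt hz1, Ioo_subset_Ioc_self hz2⟩

def g : ℝ → ℝ := fun x => ∫ t in (0:ℝ)..x, f t

lemma g_hasDerivAt (x : ℝ) : HasDerivAt g (f x) x :=
  intervalIntegral.integral_hasDerivAt_right (f_cont.intervalIntegrable 0 x)
    (f_cont.stronglyMeasurableAtFilter _ _) f_cont.continuousAt

lemma g_strictMono : StrictMono g := by
  intro x y hxy
  have : g x + ∫ t in x..y, f t = g y :=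
    intervalIntegral.integral_add_adjacent_intervals
      (f_cont.intervalIntegrable 0 x) (f_cont.intervalIntegrable x y)
  linarith [integral_f_pos hxy]

lemma g_zero : g 0 = 0 := intervalIntegral.integral_same

lemma g_one_pos : 0 < g 1 := by
  have := g_strictMono (show (0:ℝ) < 1 by norm_num)
  rwa [g_zero] at this

end Stmt0Aux
end

open Stmt0Aux in
/-- Lemma 2.9: there exists a strictly increasing continuous function
`q : [0,1] → [0,1]` that is continuously differentiable on `(0,1)`, whose
derivative extends to a Lipschitz continuous function on `[0,1]`, and whose
derivative vanishes on a subset of `(0,1)` of strictly positive Lebesgue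
measure. -/
theorem stmt_0 :
    ∃ (q q' : ℝ → ℝ) (K : NNReal),
      Set.MapsTo q (Set.Icc 0 1) (Set.Icc 0 1) ∧
      StrictMonoOn q (Set.Icc 0 1) ∧
      ContinuousOn q (Set.Icc 0 1) ∧
      (∀ x ∈ Set.Ioo (0:ℝ) 1, HasDerivAt q (q' x) x) ∧
      ContinuousOn q' (Set.Ioo 0 1) ∧
      LipschitzOnWith K q' (Set.Icc 0 1) ∧
      0 < volume {z ∈ Set.Ioo (0:ℝ) 1 | q' z = 0} := by
  have hc := g_one_pos
  refine ⟨fun x => g x / g 1, fun x => f x / g 1, ‖(g 1)⁻¹‖₊, ?_, ?_, ?_, ?_, ?_, ?_, ?_⟩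
  · intro x hx
    constructor
    · apply div_nonneg _ hc.le
      rw [← g_zero]
      exact g_strictMono.monotone hx.1
    · rw [div_le_one hc]
      exact g_strictMono.monotone hx.2
  · exact (g_strictMono.div_const hc).strictMonoOn _
  · have hg : Continuous g := continuous_iff_continuousAt.2 fun x => (g_hasDerivAt x).continuousAt
    exact (hg.div_const _).continuousOn
  · exact fun x _ => (g_hasDerivAt x).div_const _
  · exact (f_cont.div_const _).continuousOn
  · apply LipschitzWith.lipschitzOnWith
    apply LipschitzWith.of_dist_le_mul
    intro a b
    have := f_lipschitz.dist_le_mul a b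
    rw [div_eq_inv_mul, div_eq_inv_mul, Real.dist_eq, ← mul_sub, abs_mul, ← Real.dist_eq]
    calc |(g 1)⁻¹| * dist (f a) (f b) ≤ |(g 1)⁻¹| * dist a b := by
          apply mul_le_mul_of_nonneg_left _ (abs_nonneg _)
          simpa using this
      _ = ‖(g 1)⁻¹‖₊ * dist a b := rfl
  · have hsub : C ∩ Ioo 0 1 ⊆ {z ∈ Set.Ioo (0:ℝ) 1 | f z / g 1 = 0} := by
      rintro z ⟨hz1, hz2⟩
      exact ⟨hz2, by rw [f_zero_of_mem hz1, zero_div]⟩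
    refine lt_of_lt_of_le ?_ (measure_mono hsub)
    have h1 : volume C ≤ volume (C ∩ Ioo 0 1) + volume (C \ Ioo 0 1) :=
      measure_le_inter_add_diff _ _ _
    have h2 : volume (C \ Ioo 0 1) = 0 := by
      refine measure_mono_null (t := ({0, 1} : Set ℝ)) ?_ ?_
      · rintro z ⟨⟨hz1, _⟩, hz2⟩
        simp only [mem_Ioo, not_and, not_lt] at hz2
        rcases lt_or_eq_of_le hz1.1 with h | h
        · right; exact le_antisymm hz1.2 (hz2 h)
        · left; exact h.symm
      · exact (Set.toFinite _).measure_zero volume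
    rw [h2, add_zero] at h1
    have := half_le_volume_C.trans h1
    exact lt_of_lt_of_le (by norm_num) this
end

section
/- Let G ⊆ [0,1] be a closed set with empty interior and strictly positive Lebesgue measure, and define d_G(x) = inf_{y ∈ G} |y − x| and q(x) = ∫₀ˣ d_G(z) dz for x ∈ [0,1]. Then: (i) q is strictly increasing on [0,1]; (ii) q is differentiable on [0,1] with derivative q'(x) = d_G(x), and d_G is Lipschitz continuous with constant 1; (iii) the set {z ∈ (0,1) : q'(z) = 0} equals (0,1) ∩ G and has strictly positive Lebesgue measure. -/
open MeasureTheory Set Filter Topology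

/-- The explicit construction in the proof of Lemma 2.9: for a closed set
`G ⊆ [0,1]` with empty interior and positive Lebesgue measure,
`q x = ∫₀ˣ dist(z, G) dz` is strictly increasing on `[0,1]`, differentiable on
`[0,1]` with derivative `dist(·, G)`, which is 1-Lipschitz, and the zero set of
the derivative inside `(0,1)` equals `(0,1) ∩ G` and has positive measure. -/
theorem stmt_1 (G : Set ℝ) (hG_sub : G ⊆ Set.Icc 0 1) (hG_closed : IsClosed G)
    (hG_int : interior G = ∅) (hG_pos : 0 < volume G)
    (q : ℝ → ℝ) (hq : ∀ x, q x = ∫ z in (0:ℝ)..x, Metric.infDist z G) :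
    StrictMonoOn q (Set.Icc 0 1) ∧
    (∀ x ∈ Set.Icc (0:ℝ) 1, HasDerivWithinAt q (Metric.infDist x G) (Set.Icc 0 1) x) ∧
    LipschitzWith 1 (fun x => Metric.infDist x G) ∧
    {z ∈ Set.Ioo (0:ℝ) 1 | Metric.infDist z G = 0} = Set.Ioo 0 1 ∩ G ∧
    0 < volume {z ∈ Set.Ioo (0:ℝ) 1 | Metric.infDist z G = 0} := by
  have hGne : G.Nonempty := by
    rcases G.eq_empty_or_nonempty with h | h
    · simp [h] at hG_pos
    · exact h
  set f : ℝ → ℝ := fun z => Metric.infDist z G with hf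
  have hf_cont : Continuous f := Metric.continuous_infDist_pt G
  have hf_nonneg : ∀ z, 0 ≤ f z := fun z => Metric.infDist_nonneg
  have hq_eq : q = fun x => ∫ z in (0:ℝ)..x, f z := funext hq
  subst hq_eq
  refine ⟨?_, ?_, ?_, ?_, ?_⟩
  · -- strict mono
    intro x hx y hy hxy
    have hsub : (∫ z in (0:ℝ)..y, f z) - ∫ z in (0:ℝ)..x, f z = ∫ z in x..y, f z :=
      intervalIntegral.integral_interval_sub_left
        (hf_cont.intervalIntegrable _ _) (hf_cont.intervalIntegrable _ _)
    have hz : ∃ z ∈ Set.Ioo x y, z ∉ G := by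
      by_contra h
      push_neg at h
      have : Set.Ioo x y ⊆ interior G :=
        (IsOpen.subset_interior_iff isOpen_Ioo).mpr h
      rw [hG_int, Set.subset_empty_iff] at this
      exact (Set.nonempty_Ioo.2 hxy).ne_empty this
    obtain ⟨z, hzmem, hzG⟩ := hz
    have hfz : 0 < f z := (hG_closed.notMem_iff_infDist_pos hGne).mp hzG
    have hpos : 0 < ∫ z in x..y, f z :=
      intervalIntegral.integral_pos hxy (hf_cont.continuousOn)
        (fun t _ => hf_nonneg t) ⟨z, Set.Ioo_subset_Icc_self hzmem, hfz⟩
    simp only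
    linarith [hsub]
  · -- derivative
    intro x _
    exact (intervalIntegral.integral_hasDerivAt_right
      (hf_cont.intervalIntegrable _ _)
      (hf_cont.stronglyMeasurableAtFilter _ _)
      hf_cont.continuousAt).hasDerivWithinAt
  · exact Metric.lipschitz_infDist_pt G
  · ext z
    simp only [Set.mem_setOf_eq, Set.mem_inter_iff, Set.mem_Ioo]
    constructor
    · rintro ⟨⟨h0, h1⟩, hz⟩
      exact ⟨⟨h0, h1⟩, (hG_closed.mem_iff_infDist_zero hGne).mpr hz⟩
    · rintro ⟨⟨h0, h1⟩, hz⟩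
      exact ⟨⟨h0, h1⟩, Metric.infDist_zero_of_mem hz⟩
  · have heq : {z ∈ Set.Ioo (0:ℝ) 1 | Metric.infDist z G = 0} = Set.Ioo 0 1 ∩ G := by
      ext z
      simp only [Set.mem_setOf_eq, Set.mem_inter_iff, Set.mem_Ioo]
      constructor
      · rintro ⟨⟨h0, h1⟩, hz⟩
        exact ⟨⟨h0, h1⟩, (hG_closed.mem_iff_infDist_zero hGne).mpr hz⟩
      · rintro ⟨⟨h0, h1⟩, hz⟩
        exact ⟨⟨h0, h1⟩, Metric.infDist_zero_of_mem hz⟩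
    rw [heq]
    have hcover : G ⊆ (Set.Ioo 0 1 ∩ G) ∪ ({0, 1} : Set ℝ) := by
      intro z hz
      rcases eq_or_ne z 0 with rfl | h0
      · exact Or.inr (by simp)
      rcases eq_or_ne z 1 with rfl | h1
      · exact Or.inr (by simp)
      · have hzI := hG_sub hz
        exact Or.inl ⟨⟨lt_of_le_of_ne hzI.1 (Ne.symm h0), lt_of_le_of_ne hzI.2 h1⟩, hz⟩
    have := measure_mono (μ := volume) hcover
    have hle := this.trans (measure_union_le _ _)
    have h01 : volume ({0, 1} : Set ℝ) = 0 := by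
      rw [Set.insert_eq]
      exact measure_union_null (measure_singleton 0) (measure_singleton 1)
    rw [h01, add_zero] at hle
    exact lt_of_lt_of_le hG_pos hle
end

section
/- Let I' ⊆ ℝ be a nonempty open interval and let q : ℝ → ℝ be a Borel function whose restriction to I' is continuous and strictly increasing and is, on every compact subinterval of I', the difference of two convex functions (so that the right derivative q'_+(x) = lim_{h↘0} (q(x+h) − q(x))/h exists for every x ∈ I'). Then the following are equivalent: (i) the set {x ∈ I' : q'_+(x) = 0} has Lebesgue measure zero; (ii) the pushforward under q of Lebesgue measure restricted to I' is absolutely continuous with respect to Lebesgue measure. -/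
/-!
A monotone function is differentiable almost everywhere, so off a null set the right derivative
`qp` is a genuine derivative of the injective function `q`. On such a set the one-dimensional
Jacobian formula `volume (q '' B) = ∫⁻ x in B, |qp x|` holds: the image of the zero set of `qp`
is null (Sard), while a set on which `qp ≠ 0` is null as soon as its image is. So the pushforward
charges no null set exactly when the zero set of `qp` is null.
-/

open MeasureTheory Set Filter Topology

theorem MeasurableSet.exists_measurable_subset_ae_eq_of_ae_restrict {α : Type*}
    [MeasurableSpace α] {μ : Measure α} {s : Set α} {p : α → Prop} (hs : MeasurableSet s)
    (h : ∀ᵐ x ∂μ.restrict s, p x) :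
    ∃ t ⊆ {x ∈ s | p x}, MeasurableSet t ∧ t =ᵐ[μ] s := by
  have hps : {x ∈ s | p x} =ᵐ[μ] s := by
    filter_upwards [(ae_restrict_iff' hs).1 h] with x hx
    exact propext ⟨fun hx' => hx'.1, fun hx' => ⟨hx', hx hx'⟩⟩
  obtain ⟨t, hts, ht, hteq⟩ :=
    (hs.nullMeasurableSet.congr hps.symm).exists_measurable_subset_ae_eq
  exact ⟨t, hts, ht, hteq.trans hps⟩

theorem MonotoneOn.ae_hasDerivAt_of_tendsto_slope {f f' : ℝ → ℝ} {s : Set ℝ}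
    (hf : MonotoneOn f s) (hs : IsOpen s)
    (hf' : ∀ x ∈ s, Tendsto (fun h : ℝ => (f (x + h) - f x) / h) (𝓝[>] 0) (𝓝 (f' x))) :
    ∀ᵐ x ∂volume.restrict s, HasDerivAt f (f' x) x := by
  filter_upwards [hf.ae_differentiableWithinAt hs.measurableSet,
    ae_restrict_mem hs.measurableSet] with x hdiff hx
  have hd := (hdiff.differentiableAt (hs.mem_nhds hx)).hasDerivAt
  have hslope := hd.tendsto_slope_zero_right
  simp only [smul_eq_mul, ← div_eq_inv_mul] at hslope
  rwa [tendsto_nhds_unique (hf' x hx) hslope]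

theorem volume_image_eq_zero_of_hasDerivWithinAt_zero {f f' : ℝ → ℝ} {s : Set ℝ}
    (hf' : ∀ x ∈ s, HasDerivWithinAt f (f' x) s x) (h₀ : ∀ x ∈ s, f' x = 0) :
    volume (f '' s) = 0 :=
  addHaar_image_eq_zero_of_det_fderivWithin_eq_zero volume
    (fun x hx => (hf' x hx).hasFDerivWithinAt) (fun x hx => by simp [h₀ x hx])

theorem volume_setOf_deriv_ne_zero_of_volume_image_eq_zero {f f' : ℝ → ℝ} {s : Set ℝ}
    (hs : MeasurableSet s) (hf' : ∀ x ∈ s, HasDerivWithinAt f (f' x) s x) (hf : InjOn f s)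
    (himage : volume (f '' s) = 0) :
    volume {x ∈ s | f' x ≠ 0} = 0 := by
  have hmeas : AEMeasurable (fun x => ENNReal.ofReal |f' x|) (volume.restrict s) := by
    have := aemeasurable_fderivWithin volume hs fun x hx => (hf' x hx).hasFDerivWithinAt
    exact ((this.apply_continuousLinearMap 1).congr (ae_of_all _ fun x => by simp)).abs
      |>.ennreal_ofReal
  have hint : ∫⁻ x in s, ENNReal.ofReal |f' x| = 0 := by
    simpa [himage] using (lintegral_image_eq_lintegral_abs_deriv_mul hs hf' hf 1).symm
  have hzero := (ae_restrict_iff' hs).1 ((lintegral_eq_zero_iff' hmeas).1 hint)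
  rw [measure_eq_zero_iff_ae_notMem]
  filter_upwards [hzero] with x hx hxs
  exact hxs.2 (by simpa using hx hxs.1)

theorem map_restrict_absolutelyContinuous_iff_volume_setOf_deriv_eq_zero {f f' : ℝ → ℝ}
    {s : Set ℝ} (hs : MeasurableSet s) (hf : Measurable f) (hinj : InjOn f s)
    (hf' : ∀ x ∈ s, HasDerivWithinAt f (f' x) s x) :
    (volume.restrict s).map f ≪ volume ↔ volume {x ∈ s | f' x = 0} = 0 := by
  constructor
  · intro hac
    set Z := {x ∈ s | f' x = 0}
    have hZs : Z ⊆ s := sep_subset s _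
    have hZ : volume (f '' Z) = 0 := volume_image_eq_zero_of_hasDerivWithinAt_zero
      (fun x hx => (hf' x (hZs hx)).mono hZs) fun _ hx => hx.2
    have hpre := hac (measure_toMeasurable (f '' Z) ▸ hZ)
    rw [Measure.map_apply hf (measurableSet_toMeasurable _ _),
      Measure.restrict_apply (hf (measurableSet_toMeasurable _ _))] at hpre
    refine measure_mono_null (fun x hx => ?_) hpre
    exact ⟨subset_toMeasurable _ _ (mem_image_of_mem f hx), hZs hx⟩
  · intro hZ
    refine Measure.AbsolutelyContinuous.mk fun A hA hA0 => ?_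
    rw [Measure.map_apply hf hA, Measure.restrict_apply (hf hA)]
    have hts : f ⁻¹' A ∩ s ⊆ s := inter_subset_right
    have hne := volume_setOf_deriv_ne_zero_of_volume_image_eq_zero ((hf hA).inter hs)
      (fun x hx => (hf' x (hts hx)).mono hts) (hinj.mono hts)
      (measure_mono_null (image_subset_iff.2 fun _ hx => hx.1) hA0)
    refine measure_mono_null (fun x hx => ?_) (measure_union_null hne hZ)
    by_cases h : f' x = 0
    · exact Or.inr ⟨hx.2, h⟩
    · exact Or.inl ⟨hx, h⟩

theorem stmt_3_general (I : Set ℝ) (hI_open : IsOpen I)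
    (q : ℝ → ℝ) (hq_meas : Measurable q)
    (hq_mono : StrictMonoOn q I)
    (qp : ℝ → ℝ)
    (hqp : ∀ x ∈ I,
      Filter.Tendsto (fun h : ℝ => (q (x + h) - q x) / h) (𝓝[>] 0) (𝓝 (qp x))) :
    volume {x ∈ I | qp x = 0} = 0 ↔ (volume.restrict I).map q ≪ volume := by
  obtain ⟨W, hWI, hW, hW_ae⟩ :=
    hI_open.measurableSet.exists_measurable_subset_ae_eq_of_ae_restrict
      (hq_mono.monotoneOn.ae_hasDerivAt_of_tendsto_slope hI_open hqp)
  have key := map_restrict_absolutelyContinuous_iff_volume_setOf_deriv_eq_zero hW hq_meas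
    (hq_mono.injOn.mono fun x hx => (hWI hx).1) fun x hx => (hWI hx).2.hasDerivWithinAt
  rw [Measure.restrict_congr_set hW_ae] at key
  have hzeros : {x ∈ W | qp x = 0} =ᵐ[volume] {x ∈ I | qp x = 0} :=
    hW_ae.inter (ae_eq_refl {x | qp x = 0})
  rw [key, measure_congr hzeros]

/-- Theorem 2.7, (b) ⇔ (c): for a Borel function `q` that is continuous and
strictly increasing on a nonempty open interval `I` and is a difference of two
convex functions on every compact subinterval of `I` (with right derivative
`qp` on `I`), the set `{x ∈ I : qp x = 0}` is Lebesgue-null if and only if the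
pushforward under `q` of Lebesgue measure restricted to `I` is absolutely
continuous with respect to Lebesgue measure. -/
theorem stmt_3 (I : Set ℝ) (hI_open : IsOpen I) (hI_ne : I.Nonempty)
    (hI_conn : I.OrdConnected)
    (q : ℝ → ℝ) (hq_meas : Measurable q)
    (hq_cont : ContinuousOn q I) (hq_mono : StrictMonoOn q I)
    (hq_dc : ∀ a b : ℝ, a ∈ I → b ∈ I → a ≤ b → ∃ f g : ℝ → ℝ,
      ConvexOn ℝ (Set.Icc a b) f ∧ ConvexOn ℝ (Set.Icc a b) g ∧
      ∀ x ∈ Set.Icc a b, q x = f x - g x)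
    (qp : ℝ → ℝ)
    (hqp : ∀ x ∈ I,
      Filter.Tendsto (fun h : ℝ => (q (x + h) - q x) / h) (𝓝[>] 0) (𝓝 (qp x))) :
    volume {x ∈ I | qp x = 0} = 0 ↔ (volume.restrict I).map q ≪ volume :=
  stmt_3_general I hI_open q hq_meas hq_mono qp hqp
end

section
/- Let I' ⊆ ℝ be a nonempty open interval and let q : ℝ → ℝ be a Borel function whose restriction to I' is continuous and strictly increasing and is, on every compact subinterval of I', the difference of two convex functions (so that the right derivative q'_+(x) = lim_{h↘0} (q(x+h) − q(x))/h exists for every x ∈ I'). Let μ_q be the Borel measure on I' determined by μ_q((a,b]) = q(b) − q(a) for a ≤ b in I'. Then the set {x ∈ I' : q'_+(x) = 0} has Lebesgue measure zero if and only if Lebesgue measure restricted to I' is absolutely continuous with respect to μ_q. -/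
/-!
On an interval `(a, b)` with `[a, b] ⊆ I` the measure `μq` is finite, and Lebesgue's
differentiation theorem along the Vitali family of intervals `[x, y]`, `y ↘ x`, identifies its
Radon–Nikodym derivative with respect to Lebesgue measure `λ` with `qp`, since
`μq [x, y] = q y - q x` (continuity of `q` rules out atoms). For a σ-finite `ν`, `λ` restricted to
`{dν/dλ = 0}` is singular to `ν`, so `λ` restricted to a set is absolutely continuous with respect
to `ν` iff `dν/dλ ≠ 0` a.e. on it. Covering `I` by countably many such intervals gives the theorem.
-/

open MeasureTheory Set Filter Topology

open scoped ENNReal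

namespace MeasureTheory.Measure

variable {α : Type*} [MeasurableSpace α] {μ ν : Measure α}

theorem mutuallySingular_restrict_rnDeriv_eq_zero [ν.HaveLebesgueDecomposition μ] :
    μ.restrict {x | ν.rnDeriv μ x = 0} ⟂ₘ ν := by
  have hN : MeasurableSet {x | ν.rnDeriv μ x = 0} :=
    measurable_rnDeriv ν μ (measurableSet_singleton 0)
  suffices μ.restrict {x | ν.rnDeriv μ x = 0} ⟂ₘ ν.singularPart μ + μ.withDensity (ν.rnDeriv μ) by
    rwa [← ν.haveLebesgueDecomposition_add μ] at this
  refine ((mutuallySingular_singularPart ν μ).symm.restrict _).add_right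
    ⟨_, hN.compl, by simp [restrict_apply hN.compl], ?_⟩
  rw [compl_compl, withDensity_apply _ hN, setLIntegral_congr_fun hN fun _ hx => hx,
    lintegral_zero]

theorem restrict_absolutelyContinuous_iff_ae_rnDeriv_ne_zero [SigmaFinite μ] [SigmaFinite ν]
    {s : Set α} (hs : MeasurableSet s) :
    μ.restrict s ≪ ν ↔ ∀ᵐ x ∂μ.restrict s, ν.rnDeriv μ x ≠ 0 := by
  constructor
  · intro h
    have hsN : (μ.restrict s).restrict {x | ν.rnDeriv μ x = 0} = 0 :=
      eq_zero_of_absolutelyContinuous_of_mutuallySingular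
        (restrict_le_self.absolutelyContinuous.trans h)
        (mutuallySingular_restrict_rnDeriv_eq_zero.mono_ac
          (restrict_mono subset_rfl restrict_le_self).absolutelyContinuous .rfl)
    simpa [ae_iff] using hsN
  · intro h
    refine (withDensity_absolutelyContinuous' (measurable_rnDeriv ν μ).aemeasurable h).trans ?_
    rw [← restrict_withDensity hs]
    exact (restrict_le_self.trans (withDensity_rnDeriv_le ν μ)).absolutelyContinuous

theorem restrict_absolutelyContinuous_iff_restrict {s : Set α} :
    μ.restrict s ≪ ν ↔ μ.restrict s ≪ ν.restrict s :=
  ⟨fun h => by simpa [restrict_restrict_of_subset] using h.restrict s,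
    fun h => h.trans restrict_le_self.absolutelyContinuous⟩

theorem restrict_biUnion_absolutelyContinuous_iff {ι : Type*} {t : Set ι} (ht : t.Countable)
    (s : ι → Set α) :
    μ.restrict (⋃ i ∈ t, s i) ≪ ν ↔ ∀ i ∈ t, μ.restrict (s i) ≪ ν := by
  simp only [AbsolutelyContinuous, measure_eq_zero_iff_ae_notMem, ae_restrict_biUnion_iff _ ht]
  exact ⟨fun h i hi u hu => h hu i hi, fun h u hu i hi => h i hi hu⟩

end MeasureTheory.Measure

open MeasureTheory.Measure

theorem Real.ae_rnDeriv_volume_eq_of_tendsto_Icc (ν : Measure ℝ) [IsLocallyFiniteMeasure ν]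
    {s : Set ℝ} {g : ℝ → ℝ≥0∞}
    (h : ∀ x ∈ s, Tendsto (fun y => ν (Icc x y) / volume (Icc x y)) (𝓝[>] x) (𝓝 (g x))) :
    ∀ᵐ x, x ∈ s → ν.rnDeriv volume x = g x := by
  filter_upwards [VitaliFamily.ae_tendsto_rnDeriv
    (IsUnifLocDoublingMeasure.vitaliFamily (volume : Measure ℝ) 1) ν] with x hx hxs
  exact tendsto_nhds_unique (hx.comp (Real.tendsto_Icc_vitaliFamily_right x)) (h x hxs)

theorem IsOpen.eq_biUnion_Ioo_rat {I : Set ℝ} (hI : IsOpen I) :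
    I = ⋃ p ∈ {p : ℚ × ℚ | Icc (p.1 : ℝ) p.2 ⊆ I}, Ioo (p.1 : ℝ) p.2 := by
  refine Subset.antisymm (fun x hx => ?_)
    (iUnion₂_subset fun p hp => Ioo_subset_Icc_self.trans hp)
  obtain ⟨ε, hε, hball⟩ := Metric.isOpen_iff.1 hI x hx
  obtain ⟨a, hxa, hax⟩ := exists_rat_btwn (sub_lt_self x hε)
  obtain ⟨b, hxb, hbx⟩ := exists_rat_btwn (lt_add_of_pos_right x hε)
  refine mem_biUnion (x := (a, b)) (fun y hy => hball ?_) ⟨hax, hxb⟩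
  rw [Real.ball_eq_Ioo]
  exact ⟨hxa.trans_le hy.1, hy.2.trans_lt hbx⟩

theorem MonotoneOn.nonneg_of_tendsto_slope_nhdsGT {I : Set ℝ} {q : ℝ → ℝ} {x l : ℝ}
    (hq : MonotoneOn q I) (hI : I ∈ 𝓝 x)
    (h : Tendsto (fun h => (q (x + h) - q x) / h) (𝓝[>] 0) (𝓝 l)) : 0 ≤ l := by
  have hxI : ∀ᶠ h in 𝓝[>] (0 : ℝ), x + h ∈ I :=
    nhdsWithin_le_nhds (((continuous_const_add x).tendsto 0).eventually_mem (by simpa using hI))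
  refine ge_of_tendsto h ?_
  filter_upwards [hxI, self_mem_nhdsWithin] with t ht (htpos : 0 < t)
  exact div_nonneg (sub_nonneg.2 (hq (mem_of_mem_nhds hI) ht (by linarith))) htpos.le

def IsStieltjesMeasureOn (μ : Measure ℝ) (q : ℝ → ℝ) (I : Set ℝ) : Prop :=
  ∀ a b, a ∈ I → b ∈ I → a ≤ b → μ (Ioc a b) = ENNReal.ofReal (q b - q a)

namespace IsStieltjesMeasureOn

variable {μ : Measure ℝ} {q qp : ℝ → ℝ} {I : Set ℝ} {a b x : ℝ}

theorem measure_singleton (hμ : IsStieltjesMeasureOn μ q I) (hI : IsOpen I) (hx : x ∈ I)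
    (hqx : ContinuousAt q x) : μ {x} = 0 := by
  have hq_left : Tendsto (fun a => ENNReal.ofReal (q x - q a)) (𝓝[<] x) (𝓝 0) := by
    have : Tendsto (fun a => q x - q a) (𝓝 x) (𝓝 (q x - q x)) :=
      tendsto_const_nhds.sub hqx.tendsto
    simpa using (ENNReal.tendsto_ofReal this).mono_left nhdsWithin_le_nhds
  refine le_antisymm (ge_of_tendsto hq_left ?_) zero_le
  filter_upwards [nhdsWithin_le_nhds (hI.mem_nhds hx), self_mem_nhdsWithin] with a ha (hax : a < x)
  rw [← hμ a x ha hx hax.le]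
  exact measure_mono (singleton_subset_iff.2 ⟨hax, le_rfl⟩)

theorem measure_Icc (hμ : IsStieltjesMeasureOn μ q I) (hI : IsOpen I) {y : ℝ} (hx : x ∈ I)
    (hy : y ∈ I) (hxy : x ≤ y) (hqx : ContinuousAt q x) :
    μ (Icc x y) = ENNReal.ofReal (q y - q x) := by
  rw [← hμ x y hx hy hxy]
  refine le_antisymm ?_ (measure_mono Ioc_subset_Icc_self)
  rw [← Ioc_insert_left hxy, insert_eq]
  exact (measure_union_le _ _).trans (by rw [hμ.measure_singleton hI hx hqx, zero_add])

theorem measure_Ioo_lt_top (hμ : IsStieltjesMeasureOn μ q I) (hab : Icc a b ⊆ I) :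
    μ (Ioo a b) < ∞ := by
  rcases le_or_gt a b with hle | hlt
  · refine (measure_mono Ioo_subset_Ioc_self).trans_lt ?_
    rw [hμ a b (hab ⟨le_rfl, hle⟩) (hab ⟨hle, le_rfl⟩) hle]
    exact ENNReal.ofReal_lt_top
  · simp [Ioo_eq_empty_of_le hlt.le]

theorem tendsto_restrict_Icc_div_volume (hμ : IsStieltjesMeasureOn μ q I) (hI : IsOpen I)
    (hq : ContinuousOn q I) (hab : Icc a b ⊆ I) (hx : x ∈ Ioo a b) {l : ℝ}
    (hl : Tendsto (fun h => (q (x + h) - q x) / h) (𝓝[>] 0) (𝓝 l)) :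
    Tendsto (fun y => μ.restrict (Ioo a b) (Icc x y) / volume (Icc x y)) (𝓝[>] x)
      (𝓝 (ENNReal.ofReal l)) := by
  have hxI : x ∈ I := hab (Ioo_subset_Icc_self hx)
  have hslope : Tendsto (fun y => (q y - q x) / (y - x)) (𝓝[>] x) (𝓝 l) := by
    have hshift : Tendsto (· - x) (𝓝[>] x) (𝓝[>] 0) := by simp [Tendsto]
    simpa [Function.comp_def] using hl.comp hshift
  refine ((ENNReal.continuous_ofReal.tendsto l).comp hslope).congr' ?_
  filter_upwards [Ioo_mem_nhdsGT hx.2] with y hy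
  have hyI : y ∈ I := hab ⟨hx.1.le.trans hy.1.le, hy.2.le⟩
  rw [Measure.restrict_apply measurableSet_Icc, inter_eq_left.2 (Icc_subset_Ioo hx.1 hy.2),
    hμ.measure_Icc hI hxI hyI hy.1.le (hq.continuousAt (hI.mem_nhds hxI)), Real.volume_Icc,
    Function.comp_apply, ENNReal.ofReal_div_of_pos (sub_pos.2 hy.1)]

theorem ae_rnDeriv_restrict_Ioo (hμ : IsStieltjesMeasureOn μ q I) (hI : IsOpen I)
    (hq : ContinuousOn q I)
    (hqp : ∀ x ∈ I, Tendsto (fun h => (q (x + h) - q x) / h) (𝓝[>] 0) (𝓝 (qp x)))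
    (hab : Icc a b ⊆ I) :
    ∀ᵐ x ∂volume.restrict (Ioo a b),
      (μ.restrict (Ioo a b)).rnDeriv volume x = ENNReal.ofReal (qp x) := by
  have := isFiniteMeasure_restrict.2 (hμ.measure_Ioo_lt_top hab).ne
  rw [ae_restrict_iff' measurableSet_Ioo]
  exact Real.ae_rnDeriv_volume_eq_of_tendsto_Icc _ fun x hx =>
    hμ.tendsto_restrict_Icc_div_volume hI hq hab hx (hqp x (hab (Ioo_subset_Icc_self hx)))

theorem restrict_Ioo_absolutelyContinuous_iff (hμ : IsStieltjesMeasureOn μ q I) (hI : IsOpen I)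
    (hq : ContinuousOn q I) (hq_mono : MonotoneOn q I)
    (hqp : ∀ x ∈ I, Tendsto (fun h => (q (x + h) - q x) / h) (𝓝[>] 0) (𝓝 (qp x)))
    (hab : Icc a b ⊆ I) :
    volume.restrict (Ioo a b) ≪ μ ↔ ∀ᵐ x ∂volume.restrict (Ioo a b), qp x ≠ 0 := by
  have := isFiniteMeasure_restrict.2 (hμ.measure_Ioo_lt_top hab).ne
  rw [restrict_absolutelyContinuous_iff_restrict,
    restrict_absolutelyContinuous_iff_ae_rnDeriv_ne_zero measurableSet_Ioo]
  refine eventually_congr ?_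
  filter_upwards [hμ.ae_rnDeriv_restrict_Ioo hI hq hqp hab, ae_restrict_mem measurableSet_Ioo]
    with x hx hxab
  have hxI : x ∈ I := hab (Ioo_subset_Icc_self hxab)
  rw [hx, ne_eq, ENNReal.ofReal_eq_zero, not_le,
    (hq_mono.nonneg_of_tendsto_slope_nhdsGT (hI.mem_nhds hxI) (hqp x hxI)).lt_iff_ne']

end IsStieltjesMeasureOn

theorem stmt_7_general (I : Set ℝ) (hI_open : IsOpen I)
    (q : ℝ → ℝ)
    (hq_cont : ContinuousOn q I) (hq_mono : StrictMonoOn q I)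
    (qp : ℝ → ℝ)
    (hqp : ∀ x ∈ I,
      Filter.Tendsto (fun h : ℝ => (q (x + h) - q x) / h) (𝓝[>] 0) (𝓝 (qp x)))
    (μq : Measure ℝ)
    (hμq : ∀ a b : ℝ, a ∈ I → b ∈ I → a ≤ b →
      μq (Set.Ioc a b) = ENNReal.ofReal (q b - q a)) :
    volume {x ∈ I | qp x = 0} = 0 ↔ volume.restrict I ≪ μq := by
  have hμ : IsStieltjesMeasureOn μq q I := hμq
  have hzero : volume {x ∈ I | qp x = 0} = 0 ↔ ∀ᵐ x ∂volume.restrict I, qp x ≠ 0 := by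
    rw [ae_restrict_iff' hI_open.measurableSet, ae_iff]
    simp
  rw [hzero, hI_open.eq_biUnion_Ioo_rat, ae_restrict_biUnion_iff _ (to_countable _),
    restrict_biUnion_absolutelyContinuous_iff (to_countable _)]
  exact forall₂_congr fun p hp =>
    (hμ.restrict_Ioo_absolutelyContinuous_iff hI_open hq_cont hq_mono.monotoneOn hqp hp).symm

/-- The intermediate equivalence `(b) ⇔ μ_L ≪ dq on s(J°)` from the proof of
Theorem 2.7: for `q` continuous and strictly increasing on a nonempty open
interval `I`, a difference of two convex functions on every compact subinterval
of `I` with right derivative `qp`, and `μq` the Borel measure on `I` with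
`μq((a,b]) = q b - q a` for `a ≤ b` in `I`, the set `{x ∈ I : qp x = 0}` is
Lebesgue-null if and only if Lebesgue measure restricted to `I` is absolutely
continuous with respect to `μq`. -/
theorem stmt_7 (I : Set ℝ) (hI_open : IsOpen I) (hI_ne : I.Nonempty)
    (hI_conn : I.OrdConnected)
    (q : ℝ → ℝ) (hq_meas : Measurable q)
    (hq_cont : ContinuousOn q I) (hq_mono : StrictMonoOn q I)
    (hq_dc : ∀ a b : ℝ, a ∈ I → b ∈ I → a ≤ b → ∃ f g : ℝ → ℝ,
      ConvexOn ℝ (Set.Icc a b) f ∧ ConvexOn ℝ (Set.Icc a b) g ∧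
      ∀ x ∈ Set.Icc a b, q x = f x - g x)
    (qp : ℝ → ℝ)
    (hqp : ∀ x ∈ I,
      Filter.Tendsto (fun h : ℝ => (q (x + h) - q x) / h) (𝓝[>] 0) (𝓝 (qp x)))
    (μq : Measure ℝ) (hμq_supp : μq Iᶜ = 0)
    (hμq : ∀ a b : ℝ, a ∈ I → b ∈ I → a ≤ b →
      μq (Set.Ioc a b) = ENNReal.ofReal (q b - q a)) :
    volume {x ∈ I | qp x = 0} = 0 ↔ volume.restrict I ≪ μq :=
  stmt_7_general I hI_open q hq_cont hq_mono qp hqp μq hμq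
end

section
/- There exist a strictly increasing continuous bijection q : [0,1] → [0,1] that is continuously differentiable on (0,1) with a derivative extending to a Lipschitz continuous function on [0,1], and a Borel set A ⊆ [0,1] of Lebesgue measure zero, such that the preimage q^{-1}(A) has strictly positive Lebesgue measure. In particular, the inverse function q^{-1} : [0,1] → [0,1] is not absolutely continuous. -/
/-!
Remove from `[0,1]` an open set of small measure containing the rationals: what is left is a
closed set `C` of positive measure whose complement is dense. The distance to `C` is
`1`-Lipschitz, nonnegative and vanishes exactly on `C`, so its normalized primitive `q` is a
`C¹` homeomorphism of `[0,1]` with Lipschitz derivative. It is strictly increasing because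
`C` has empty interior, and by Sard's lemma it maps `C` to a null set, since `q' = 0` on `C`.
-/

open MeasureTheory Set Metric

theorem StrictMonoOn.bijOn_Icc {α δ : Type*} [ConditionallyCompleteLinearOrder α]
    [TopologicalSpace α] [OrderTopology α] [DenselyOrdered α] [LinearOrder δ]
    [TopologicalSpace δ] [OrderClosedTopology δ] {f : α → δ} {a b : α}
    (hf : StrictMonoOn f (Icc a b)) (hc : ContinuousOn f (Icc a b)) (hab : a ≤ b) :
    BijOn f (Icc a b) (Icc (f a) (f b)) :=
  have ha : a ∈ Icc a b := left_mem_Icc.2 hab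
  have hb : b ∈ Icc a b := right_mem_Icc.2 hab
  ⟨fun _ hx => ⟨hf.monotoneOn ha hx hx.1, hf.monotoneOn hx hb hx.2⟩, hf.injOn,
    hc.surjOn_Icc ha hb⟩

theorem exists_isOpen_dense_measure_lt (μ : Measure ℝ) [NullSingletonClass μ] [μ.OuterRegular]
    {ε : ENNReal} (hε : 0 < ε) : ∃ U : Set ℝ, IsOpen U ∧ Dense U ∧ μ U < ε := by
  obtain ⟨U, hQU, hU, hUε⟩ := (range ((↑) : ℚ → ℝ)).exists_isOpen_lt_of_lt ε
    (by rwa [(countable_range _).measure_zero μ])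
  exact ⟨U, hU, Rat.denseRange_cast.mono hQU, hUε⟩

theorem IsClosed.exists_isClosed_subset_dense_compl_measure_pos (μ : Measure ℝ)
    [NullSingletonClass μ] [μ.OuterRegular] {s : Set ℝ} (hs : IsClosed s) (hμs : 0 < μ s) :
    ∃ C ⊆ s, IsClosed C ∧ Dense Cᶜ ∧ 0 < μ C := by
  obtain ⟨U, hU, hUd, hUs⟩ := exists_isOpen_dense_measure_lt μ hμs
  refine ⟨s \ U, sdiff_subset, hs.sdiff hU, hUd.mono fun x hx hxC => hxC.2 hx, ?_⟩
  exact (tsub_pos_of_lt hUs).trans_le le_measure_sdiff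

theorem support_infDist {α : Type*} [PseudoMetricSpace α] {C : Set α} (hC : IsClosed C) (hne : C.Nonempty) :
    Function.support (infDist · C) = Cᶜ := by
  ext x
  simp only [Function.mem_support, mem_compl_iff, hC.notMem_iff_infDist_pos hne]
  exact ⟨fun h => lt_of_le_of_ne infDist_nonneg (Ne.symm h), ne_of_gt⟩

theorem addHaar_image_eq_zero_of_hasDerivWithinAt_zero (μ : Measure ℝ) [μ.IsAddHaarMeasure]
    {f : ℝ → ℝ} {s : Set ℝ} (hf : ∀ x ∈ s, HasDerivWithinAt f 0 s x) : μ (f '' s) = 0 :=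
  addHaar_image_eq_zero_of_det_fderivWithin_eq_zero μ (f' := fun _ => 0)
    (fun x hx => by simpa using (hf x hx).hasFDerivWithinAt) fun _ _ => by simp

section Primitive

variable {f : ℝ → ℝ}

theorem intervalIntegral_pos_of_dense_support (hf : Continuous f) (hf0 : 0 ≤ f)
    (hfd : Dense (Function.support f)) {a b : ℝ} (hab : a < b) :
    0 < ∫ t in a..b, f t := by
  rw [intervalIntegral.integral_pos_iff_support_of_nonneg_ae (.of_forall hf0)
    (hf.intervalIntegrable a b)]
  refine ⟨hab, ?_⟩
  have hne : (Ioo a b ∩ Function.support f).Nonempty :=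
    hfd.inter_open_nonempty _ isOpen_Ioo (nonempty_Ioo.2 hab)
  calc (0 : ENNReal) < volume (Ioo a b ∩ Function.support f) :=
        (isOpen_Ioo.inter hf.isOpen_support).measure_pos volume hne
    _ ≤ volume (Function.support f ∩ Ioc a b) := by
        rw [inter_comm]; exact measure_mono (inter_subset_inter_right _ Ioo_subset_Ioc_self)

theorem strictMono_integral_of_dense_support (hf : Continuous f) (hf0 : 0 ≤ f)
    (hfd : Dense (Function.support f)) (c : ℝ) :
    StrictMono fun x => ∫ t in c..x, f t := fun x y hxy => by
  have h := intervalIntegral.integral_interval_sub_left (hf.intervalIntegrable (μ := volume) c y)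
    (hf.intervalIntegrable c x)
  linarith [intervalIntegral_pos_of_dense_support hf hf0 hfd hxy]

end Primitive

/-- Example 2.8 (deterministic content): there exist a strictly increasing
continuous bijection `q : [0,1] → [0,1]`, continuously differentiable on
`(0,1)` with derivative extending to a Lipschitz function on `[0,1]`, and a
Borel set `A ⊆ [0,1]` of Lebesgue measure zero, whose preimage under `q` has
strictly positive Lebesgue measure (so the inverse `q⁻¹` is not absolutely
continuous). -/
theorem stmt_8 :
    ∃ (q q' : ℝ → ℝ) (K : NNReal) (A : Set ℝ),
      StrictMonoOn q (Set.Icc 0 1) ∧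
      ContinuousOn q (Set.Icc 0 1) ∧
      Set.BijOn q (Set.Icc 0 1) (Set.Icc 0 1) ∧
      (∀ x ∈ Set.Ioo (0:ℝ) 1, HasDerivAt q (q' x) x) ∧
      ContinuousOn q' (Set.Ioo 0 1) ∧
      LipschitzOnWith K q' (Set.Icc 0 1) ∧
      A ⊆ Set.Icc 0 1 ∧ MeasurableSet A ∧ volume A = 0 ∧
      0 < volume (Set.Icc (0:ℝ) 1 ∩ q ⁻¹' A) := by
  obtain ⟨C, hCI, hC, hCd, hCvol⟩ :=
    (isClosed_Icc (a := (0:ℝ)) (b := 1)).exists_isClosed_subset_dense_compl_measure_pos volume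
      (by simp)
  set f : ℝ → ℝ := (infDist · C)
  have hf : Continuous f := continuous_infDist_pt C
  have hfd : Dense (Function.support f) := by
    rwa [support_infDist hC (nonempty_of_measure_ne_zero hCvol.ne')]
  have hmono := strictMono_integral_of_dense_support hf (fun _ => infDist_nonneg) hfd 0
  set c := ∫ t in (0:ℝ)..1, f t
  have hc : 0 < c := by simpa using hmono zero_lt_one
  set q : ℝ → ℝ := fun x => c⁻¹ * ∫ t in (0:ℝ)..x, f t
  have hq : StrictMono q := hmono.const_mul (inv_pos.2 hc)
  have hq' (x : ℝ) : HasDerivAt q (c⁻¹ * f x) x :=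
    ((hf.integral_hasStrictDerivAt 0 x).hasDerivAt).const_mul _
  have hqc : Continuous q := continuous_iff_continuousAt.2 fun x => (hq' x).continuousAt
  have hbij : BijOn q (Icc 0 1) (Icc 0 1) := by
    have hq0 : q 0 = 0 := by simp [q]
    have hq1 : q 1 = 1 := inv_mul_cancel₀ hc.ne'
    simpa [hq0, hq1] using (hq.strictMonoOn _).bijOn_Icc hqc.continuousOn zero_le_one
  have hnull : volume (q '' C) = 0 :=
    addHaar_image_eq_zero_of_hasDerivWithinAt_zero volume fun x hx => by
      simpa [f, infDist_zero_of_mem hx] using (hq' x).hasDerivWithinAt (s := C)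
  refine ⟨q, fun x => c⁻¹ * f x, ‖c⁻¹‖₊ * 1, q '' C, hq.strictMonoOn _, hqc.continuousOn, hbij,
    fun x _ => hq' x, (continuous_const.mul hf).continuousOn,
    ((lipschitzWith_smul c⁻¹).comp (lipschitz_infDist_pt C)).lipschitzOnWith,
    hbij.mapsTo.image_subset.trans' (image_mono hCI),
    ((isCompact_Icc.of_isClosed_subset hC hCI).image hqc).measurableSet, hnull, ?_⟩
  exact hCvol.trans_le (measure_mono fun x hx => ⟨hCI hx, mem_image_of_mem q hx⟩)
end
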